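/- Let (g,γ) be a construction pair on an abelian group (X,+). Then for every integer i and all x,y ∈ X, g^{−i}(x+y) = g^{−i}(x) + g^{−i}(y) + ∑_{k∈I(−2i,i)} g^{−k}(γ(x,y)). -/

import Mathlib

/-- The interval `I(i,j)` of integers: `∅` if `i = j`, `{i,…,j-1}` if `i < j`,
and `{j,…,i-1}` if `j < i`. -/
noncomputable def I (i j : ℤ) : Finset ℤ := Finset.Ico (min i j) (max i j)

/-- A construction pair `(g, γ)` on an abelian group `(X, +)`. -/
structure IsConstructionPair {X : Type*} [AddCommGroup X]
    (g : Equiv.Perm X) (γ : X → X → X) : Prop where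
  symm : ∀ x y, γ x y = γ y x
  alt : ∀ x, γ x x = 0
  add_left : ∀ x y z, γ (x + y) z = γ x z + γ y z
  add_right : ∀ x y z, γ x (y + z) = γ x y + γ x z
  c1 : ∀ x y, g⁻¹ (g x + g y)
      = x + y + γ x y + g⁻¹ (γ x y) + g⁻¹ (g⁻¹ (γ x y))
  c2 : ∀ x y z, γ (γ x y) z = 0
  c3 : ∀ x y, g⁻¹ (γ x y) = γ (g x) y

/-! Let `V` be the additive submonoid generated by the values of `γ`. By (C3) every
`gⁿ (γ x y)` is again a value of `γ`, and `V` is `2`-torsion since `γ` is alternating; by (C2)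
the `γ`-terms of (C1) vanish when one argument lies in `V`, so `g⁻¹` is additive against
translations by `V`. Hence applying `g⁻¹` to the identity for `i` gives the identity for
`i + 1`: (C1) contributes the three terms indexed by `I (-2i-2) (-2i+1)`, `g⁻¹` shifts
`I (-2i) i` to `I (-2i+1) (i+1)`, and by `2`-torsion the sums over `I a b` and `I b c` add up
to the sum over their symmetric difference `I a c`. As `g⁻¹` is injective, the identity for
`i + 1` conversely gives back the one for `i`. -/

open Finset

theorem Finset.sum_symmDiff_of_add_self_eq_zero {ι M : Type*} [DecidableEq ι] [AddCommMonoid M]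
    {f : ι → M} (hf : ∀ i, f i + f i = 0) (s t : Finset ι) :
    ∑ i ∈ symmDiff s t, f i = ∑ i ∈ s, f i + ∑ i ∈ t, f i := by
  rw [← sum_union_inter, symmDiff_eq_sup_sdiff_inf, ← sum_sdiff (inter_subset_union (s := s)),
    add_assoc, ← sum_add_distrib]
  simp [hf]

theorem I_symmDiff_I (a b c : ℤ) : symmDiff (I a b) (I b c) = I a c := by
  ext k; simp only [I, mem_symmDiff, mem_Ico]; omega

theorem sum_I_add_right {M : Type*} [AddCommMonoid M] (f : ℤ → M) (a b d : ℤ) :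
    ∑ k ∈ I a b, f (k + d) = ∑ k ∈ I (a + d) (b + d), f k := by
  rw [I, I, sum_Ico_add', min_add_add_right, max_add_add_right]

theorem zpow_neg_add_one_apply {α : Type*} (g : Equiv.Perm α) (i : ℤ) (z : α) :
    (g ^ (-(i + 1))) z = g⁻¹ ((g ^ (-i)) z) := by
  rw [← Equiv.Perm.mul_apply, ← zpow_neg_one, ← zpow_add, neg_add_rev]

section OrbitSum

variable {X : Type*} [AddCommGroup X] (g : Equiv.Perm X)

noncomputable def orbitSum (a b : ℤ) (c : X) : X := ∑ k ∈ I a b, (g ^ (-k)) c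

theorem orbitSum_zpow_apply (a b n : ℤ) (c : X) :
    orbitSum g a b ((g ^ n) c) = orbitSum g (a - n) (b - n) c := by
  simp only [orbitSum, sub_eq_add_neg a, sub_eq_add_neg b, ← sum_I_add_right,
    ← Equiv.Perm.mul_apply, ← zpow_add, neg_add, neg_neg]

variable {g} in
theorem orbitSum_add_orbitSum {c : X} (hc : ∀ n : ℤ, (g ^ n) c + (g ^ n) c = 0) (a b d : ℤ) :
    orbitSum g a b c + orbitSum g b d c = orbitSum g a d c := by
  rw [orbitSum, orbitSum, orbitSum, ← sum_symmDiff_of_add_self_eq_zero (fun k => hc (-k)),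
    I_symmDiff_I]

noncomputable def expansion (γ : X → X → X) (i : ℤ) (x y : X) : X :=
  (g ^ (-i)) x + (g ^ (-i)) y + orbitSum g (-2 * i) i (γ x y)

end OrbitSum

def gammaSpan {X : Type*} [AddCommGroup X] (γ : X → X → X) : AddSubmonoid X :=
  AddSubmonoid.closure (Set.range (Function.uncurry γ))

namespace IsConstructionPair

variable {X : Type*} [AddCommGroup X] {g : Equiv.Perm X} {γ : X → X → X}
  (h : IsConstructionPair g γ)
include h

theorem gamma_zero_right (a : X) : γ a 0 = 0 := by
  simpa using h.add_right a 0 0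

theorem gamma_add_self (a b : X) : γ a b + γ a b = 0 := by
  simpa [h.add_left, h.add_right, h.alt, h.symm b a] using h.alt (a + b)

theorem inv_zero : g⁻¹ 0 = 0 := by
  simpa [h.alt, h.gamma_zero_right] using h.c3 0 0

theorem apply_gamma (a b : X) : g (γ a b) = γ (g⁻¹ a) b := by
  rw [← Equiv.Perm.eq_inv_iff_eq, h.c3, Equiv.Perm.coe_inv, Equiv.apply_symm_apply]

theorem zpow_apply_gamma (n : ℤ) (a b : X) : (g ^ n) (γ a b) = γ ((g ^ (-n)) a) b := by
  induction n using Int.induction_on generalizing a with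
  | zero => simp
  | succ n ih => rw [zpow_add_one, Equiv.Perm.mul_apply, h.apply_gamma, ih, neg_add',
      zpow_sub_one, Equiv.Perm.mul_apply]
  | pred n ih => rw [zpow_sub_one, Equiv.Perm.mul_apply, h.c3, ih, neg_sub, sub_neg_eq_add,
      add_comm, zpow_add_one, Equiv.Perm.mul_apply, neg_neg]

theorem gamma_zpow_left (n : ℤ) (a b : X) : γ ((g ^ n) a) b = (g ^ (-n)) (γ a b) := by
  rw [h.zpow_apply_gamma, neg_neg]

theorem gamma_zpow_zpow (n : ℤ) (a b : X) :
    γ ((g ^ n) a) ((g ^ n) b) = (g ^ (-(2 * n))) (γ a b) := by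
  rw [h.gamma_zpow_left, h.symm a, h.gamma_zpow_left, h.symm b, ← Equiv.Perm.mul_apply,
    ← zpow_add]
  congr 2; ring

theorem zpow_gamma_add_self (n : ℤ) (a b : X) : (g ^ n) (γ a b) + (g ^ n) (γ a b) = 0 := by
  rw [h.zpow_apply_gamma, h.gamma_add_self]

theorem inv_add (u v : X) :
    g⁻¹ (u + v) = g⁻¹ u + g⁻¹ v + γ (g⁻¹ u) (g⁻¹ v) + g⁻¹ (γ (g⁻¹ u) (g⁻¹ v))
      + g⁻¹ (g⁻¹ (γ (g⁻¹ u) (g⁻¹ v))) := by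
  simpa only [Equiv.Perm.coe_inv, Equiv.apply_symm_apply] using h.c1 (g⁻¹ u) (g⁻¹ v)

theorem inv_add_eq_orbitSum (u v : X) :
    g⁻¹ (u + v) = g⁻¹ u + g⁻¹ v + orbitSum g (-2) 1 (γ u v) := by
  have hγ : γ (g⁻¹ u) (g⁻¹ v) = (g ^ (2 : ℤ)) (γ u v) := by
    rw [← zpow_neg_one, h.gamma_zpow_zpow]; norm_num
  have hsum : orbitSum g (-2) 1 (γ u v) = (g ^ (2 : ℤ)) (γ u v) + g⁻¹ ((g ^ (2 : ℤ)) (γ u v))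
      + g⁻¹ (g⁻¹ ((g ^ (2 : ℤ)) (γ u v))) := by
    rw [orbitSum, show I (-2) 1 = {-2, -1, 0} by decide, sum_insert (by decide),
      sum_insert (by decide), sum_singleton, ← zpow_neg_one]
    simp only [← Equiv.Perm.mul_apply, ← zpow_add]
    norm_num [add_assoc]
  rw [h.inv_add, hγ, hsum]
  abel

theorem inv_add_gamma (w a b : X) : g⁻¹ (w + γ a b) = g⁻¹ w + g⁻¹ (γ a b) := by
  rw [h.inv_add, h.c3 a b, h.symm _ (γ _ _), h.c2]
  simp only [h.inv_zero, add_zero]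

theorem inv_add_of_mem {s : X} (hs : s ∈ gammaSpan γ) (w : X) :
    g⁻¹ (w + s) = g⁻¹ w + g⁻¹ s := by
  induction hs using AddSubmonoid.closure_induction generalizing w with
  | mem _ hs => obtain ⟨⟨a, b⟩, rfl⟩ := hs; exact h.inv_add_gamma w a b
  | zero => rw [add_zero, h.inv_zero, add_zero]
  | add s t _ _ hs ht => rw [← add_assoc, ht, hs, ht, add_assoc]

theorem inv_sum_of_mem {ι : Type*} (t : Finset ι) {f : ι → X}
    (hf : ∀ k ∈ t, f k ∈ gammaSpan γ) :
    g⁻¹ (∑ k ∈ t, f k) = ∑ k ∈ t, g⁻¹ (f k) := by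
  classical
  induction t using Finset.induction_on with
  | empty => simpa using h.inv_zero
  | insert j t hj ih =>
    have hf' : ∀ k ∈ t, f k ∈ gammaSpan γ := fun k hk => hf k (mem_insert_of_mem hk)
    rw [sum_insert hj, sum_insert hj, h.inv_add_of_mem (sum_mem hf'), ih hf']

theorem zpow_apply_gamma_mem (n : ℤ) (a b : X) : (g ^ n) (γ a b) ∈ gammaSpan γ := by
  rw [h.zpow_apply_gamma]
  exact AddSubmonoid.subset_closure ⟨(_, b), rfl⟩

theorem orbitSum_gamma_mem (a b : ℤ) (x y : X) : orbitSum g a b (γ x y) ∈ gammaSpan γ :=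
  sum_mem fun k _ => h.zpow_apply_gamma_mem (-k) x y

theorem inv_orbitSum_gamma (a b : ℤ) (x y : X) :
    g⁻¹ (orbitSum g a b (γ x y)) = orbitSum g (a + 1) (b + 1) (γ x y) := by
  rw [orbitSum, h.inv_sum_of_mem _ fun k _ => h.zpow_apply_gamma_mem (-k) x y, ← zpow_neg_one]
  simp only [Equiv.Perm.zpow_apply_comm g (-1)]
  rw [← orbitSum, orbitSum_zpow_apply, sub_neg_eq_add, sub_neg_eq_add]

theorem inv_expansion (i : ℤ) (x y : X) :
    g⁻¹ (expansion g γ i x y) = expansion g γ (i + 1) x y := by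
  rw [expansion, expansion, h.inv_add_of_mem (h.orbitSum_gamma_mem _ _ x y),
    h.inv_add_eq_orbitSum, h.gamma_zpow_zpow, orbitSum_zpow_apply, h.inv_orbitSum_gamma,
    ← zpow_neg_add_one_apply, ← zpow_neg_add_one_apply,
    show (-2 : ℤ) - -(2 * -i) = -2 * (i + 1) by ring, show (1 : ℤ) - -(2 * -i) = -2 * i + 1 by ring,
    add_assoc, orbitSum_add_orbitSum (h.zpow_gamma_add_self · x y)]

theorem zpow_neg_apply_add_iff (i : ℤ) (x y : X) :
    (g ^ (-i)) (x + y) = expansion g γ i x y ↔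
      (g ^ (-(i + 1))) (x + y) = expansion g γ (i + 1) x y := by
  rw [zpow_neg_add_one_apply, ← h.inv_expansion, EmbeddingLike.apply_eq_iff_eq]

end IsConstructionPair

theorem stmt_4 {X : Type*} [AddCommGroup X] (g : Equiv.Perm X) (γ : X → X → X)
    (h : IsConstructionPair g γ) (i : ℤ) (x y : X) :
    (g ^ (-i)) (x + y)
      = (g ^ (-i)) x + (g ^ (-i)) y + ∑ k ∈ I (-2 * i) i, (g ^ (-k)) (γ x y) := by
  induction i using Int.induction_on with
  | zero => simp [I]
  | succ i ih => exact (h.zpow_neg_apply_add_iff i x y).1 ih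
  | pred i ih => exact (h.zpow_neg_apply_add_iff (-i - 1) x y).2 (by rwa [sub_add_cancel])
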